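/- arXiv:1807.01478 — 2 statements merged into one kernel-verified Lean document; each statement's English description precedes it below -/
import Mathlib

section
/- There is an absolute constant C such that for every n ≥ 2 and every n×n integer unit-Monge matrix M all of whose entries are nonnegative, there exists a weighted digraph H that is a DAG, has nonnegative integer edge weights, has size at most C·n·(log₂ n + 1), and contains 2n distinct distinguished vertices r[1],…,r[n], c[1],…,c[n], such that for all 1 ≤ i, j ≤ n a directed path from r[i] to c[j] exists in H and the distance d_H(r[i], c[j]) equals M[i,j]. -/
/-- A weighted digraph: a finite vertex set `V ⊆ ℕ`, an edge set `E ⊆ V × V`,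
and an integer weight function on edges. -/
structure WDigraph where
  V : Finset ℕ
  E : Finset (ℕ × ℕ)
  w : ℕ × ℕ → ℤ
  edge_fst : ∀ e ∈ E, e.1 ∈ V
  edge_snd : ∀ e ∈ E, e.2 ∈ V

/-- The weight of a walk, given as the list of its vertices, under weight
function `w`: the sum of the weights of its consecutive edges. -/
def walkWeight (w : ℕ × ℕ → ℤ) (l : List ℕ) : ℤ :=
  ((l.zip l.tail).map w).sum

/-- A directed walk in `H`: a nonempty list of vertices of `H` in which each
consecutive pair is an edge of `H`. -/
def IsWalk (H : WDigraph) (l : List ℕ) : Prop :=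
  l ≠ [] ∧ (∀ v ∈ l, v ∈ H.V) ∧ List.Chain' (fun u v => (u, v) ∈ H.E) l

/-- A directed walk in `H` from `u` to `v`. -/
def IsWalkFromTo (H : WDigraph) (l : List ℕ) (u v : ℕ) : Prop :=
  IsWalk H l ∧ l.head? = some u ∧ l.getLast? = some v

/-- A directed path in `H` from `u` to `v`: a walk with no repeated vertex. -/
def IsPathFromTo (H : WDigraph) (l : List ℕ) (u v : ℕ) : Prop :=
  IsWalkFromTo H l u v ∧ l.Nodup

/-- `H` is a DAG: it contains no directed cycle, i.e. no closed walk using at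
least one edge. -/
def IsDAG (H : WDigraph) : Prop :=
  ¬ ∃ (v : ℕ) (l : List ℕ), 2 ≤ l.length ∧ IsWalkFromTo H l v v

/-- `d` is the distance from `u` to `v` in `H` under weight function `w`:
some directed path from `u` to `v` attains weight `d`, and every directed path
from `u` to `v` has weight at least `d`. -/
def HasDistW (H : WDigraph) (w : ℕ × ℕ → ℤ) (u v : ℕ) (d : ℤ) : Prop :=
  (∃ l, IsPathFromTo H l u v ∧ walkWeight w l = d) ∧
  ∀ l, IsPathFromTo H l u v → d ≤ walkWeight w l

/-- The size of a weighted digraph: number of vertices plus number of edges. -/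
def WDigraph.size (H : WDigraph) : ℕ := H.V.card + H.E.card

/-- An `n × m` integer matrix (1-based indexing) is Monge. -/
def IsMonge (n m : ℕ) (M : ℕ → ℕ → ℤ) : Prop :=
  ∀ i j, 1 ≤ i → i + 1 ≤ n → 1 ≤ j → j + 1 ≤ m →
    M (i + 1) j - M i j ≤ M (i + 1) (j + 1) - M i (j + 1)

/-- An `n × m` integer matrix (1-based indexing) is unit-Monge. -/
def IsUnitMonge (n m : ℕ) (M : ℕ → ℕ → ℤ) : Prop :=
  IsMonge n m M ∧
    ∀ i j, 1 ≤ i → i + 1 ≤ n → 1 ≤ j → j ≤ m →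
      M (i + 1) j - M i j = -1 ∨ M (i + 1) j - M i j = 0 ∨ M (i + 1) j - M i j = 1

/-!
Group the rows into dyadic blocks. At a block, two columns with the same increase across the
block differ by a constant on the whole block, because the difference of two columns of a Monge
matrix is monotone down the rows; by the unit condition a block of `2 ^ ℓ` rows therefore has at
most `2 ^ (ℓ + 1) + 1` classes of columns. The emulator has a vertex for every class at every
block and an edge from it to the class containing it at the parent block, weighted by the increase
of the block minimum; rows enter at their leaves and the root classes exit to the columns. There
are `O(n / 2 ^ ℓ)` blocks at each of the `O(log n)` levels, whence the size bound. The path from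
row `i` to column `j` telescopes to `M i j`, and a potential shows that no path is shorter.
-/

namespace WDigraph

def ofEdges (E : Finset (ℕ × ℕ)) (w : ℕ × ℕ → ℤ) : WDigraph where
  V := E.image Prod.fst ∪ E.image Prod.snd
  E := E
  w := w
  edge_fst _ he := Finset.mem_union_left _ (Finset.mem_image_of_mem _ he)
  edge_snd _ he := Finset.mem_union_right _ (Finset.mem_image_of_mem _ he)

theorem size_ofEdges_le (E : Finset (ℕ × ℕ)) (w : ℕ × ℕ → ℤ) :
    (ofEdges E w).size ≤ 3 * E.card := by
  have hV := (Finset.card_union_le (E.image Prod.fst) (E.image Prod.snd)).trans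
    (add_le_add Finset.card_image_le Finset.card_image_le)
  simp only [size, ofEdges]
  omega

end WDigraph

theorem walkWeight_cons_cons (w : ℕ × ℕ → ℤ) (a b : ℕ) (l : List ℕ) :
    walkWeight w (a :: b :: l) = w (a, b) + walkWeight w (b :: l) := by
  simp [walkWeight]

theorem walkWeight_map_range (w : ℕ × ℕ → ℤ) (g : ℕ → ℕ) (m : ℕ) :
    walkWeight w ((List.range (m + 1)).map g) = ∑ k ∈ Finset.range m, w (g k, g (k + 1)) := by
  induction m generalizing g with
  | zero => simp [walkWeight]
  | succ m ih =>
    have hsplit :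
        (List.range (m + 1 + 1)).map g = g 0 :: (List.range (m + 1)).map (g ∘ (· + 1)) := by
      rw [List.range_succ_eq_map, List.map_cons, List.map_map]
    have hsplit' : (List.range (m + 1)).map (g ∘ (· + 1)) =
        g 1 :: (List.range m).map (g ∘ (· + 1) ∘ (· + 1)) := by
      rw [List.range_succ_eq_map, List.map_cons, List.map_map]; rfl
    rw [hsplit, hsplit', walkWeight_cons_cons, ← hsplit', ih, Finset.sum_range_succ' _ m]
    simp only [Function.comp_apply]
    ring

theorem isWalkFromTo_map_range {H : WDigraph} (g : ℕ → ℕ) (m : ℕ)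
    (hV : ∀ k ≤ m, g k ∈ H.V) (hE : ∀ k < m, (g k, g (k + 1)) ∈ H.E) :
    IsWalkFromTo H ((List.range (m + 1)).map g) (g 0) (g m) := by
  refine ⟨⟨by simp, ?_, ?_⟩, ?_, ?_⟩
  · simp only [List.mem_map, List.mem_range]
    rintro _ ⟨k, hk, rfl⟩
    exact hV k (by omega)
  · exact (List.isChain_map g).2 ((List.isChain_range_succ _ m).2 hE)
  · simp [List.head?_map, List.head?_range]
  · simp [List.getLast?_map, List.getLast?_range]

theorem potential_le_walkWeight {E : Finset (ℕ × ℕ)} {w : ℕ × ℕ → ℤ} {P : ℕ → ℤ}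
    (hP : ∀ e ∈ E, P e.2 ≤ P e.1 + w e) :
    ∀ {l : List ℕ} {u v : ℕ}, l.IsChain (fun a b => (a, b) ∈ E) → l.head? = some u →
      l.getLast? = some v → P v ≤ P u + walkWeight w l
  | [], _, _, _, hu, _ => by simp at hu
  | [a], u, v, _, hu, hv => by simp_all [walkWeight]
  | a :: b :: l, u, v, hl, hu, hv => by
    rw [List.isChain_cons_cons] at hl
    have hab := hP _ hl.1
    have hrest := potential_le_walkWeight hP hl.2 rfl (v := v) (by simpa using hv)
    simp only [List.head?_cons, Option.some.injEq] at hu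
    subst hu
    rw [walkWeight_cons_cons]
    linarith

section Rank

variable {H : WDigraph} {rk : ℕ → ℕ}

theorem IsWalk.pairwise_rank_lt (hrk : ∀ e ∈ H.E, rk e.1 < rk e.2) {l : List ℕ}
    (hl : IsWalk H l) : l.Pairwise (fun a b => rk a < rk b) :=
  List.IsChain.pairwise (hl.2.2.imp fun _ _ h => hrk _ h)

theorem IsWalkFromTo.isPathFromTo_of_rank (hrk : ∀ e ∈ H.E, rk e.1 < rk e.2) {l : List ℕ}
    {u v : ℕ} (hl : IsWalkFromTo H l u v) : IsPathFromTo H l u v :=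
  ⟨hl, (hl.1.pairwise_rank_lt hrk).imp fun h heq => h.ne (congrArg rk heq)⟩

theorem isDAG_of_rank (hrk : ∀ e ∈ H.E, rk e.1 < rk e.2) : IsDAG H := by
  rintro ⟨v, _ | ⟨a, l⟩, hlen, hl, hhead, hlast⟩
  · simp at hlen
  · obtain ⟨hlt, -⟩ := List.pairwise_cons.1 (hl.pairwise_rank_lt hrk)
    have ha : a = v := by simpa using hhead
    have hv : v ∈ l := by
      cases l with
      | nil => simp at hlen
      | cons b l => exact List.mem_of_getLast? (by simpa using hlast)
    exact (hlt v hv).ne (congrArg rk ha)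

end Rank

theorem hasDistW_of_potential {H : WDigraph} {w : ℕ × ℕ → ℤ} (rk : ℕ → ℕ)
    (hrk : ∀ e ∈ H.E, rk e.1 < rk e.2) (P : ℕ → ℤ) (hP : ∀ e ∈ H.E, P e.2 ≤ P e.1 + w e)
    {l : List ℕ} {u v : ℕ} {d : ℤ} (hl : IsWalkFromTo H l u v) (hw : walkWeight w l = d)
    (hd : d ≤ P v - P u) : HasDistW H w u v d :=
  ⟨⟨l, hl.isPathFromTo_of_rank hrk, hw⟩, fun _ ⟨⟨⟨_, _, hchain⟩, hhead, hlast⟩, _⟩ => by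
    linarith [potential_le_walkWeight hP hchain hhead hlast]⟩

/-- The minimum of `f` on `s`, with the junk value `0` if `s` is empty. -/
def finMin {α : Type*} (s : Finset α) (f : α → ℤ) : ℤ :=
  if h : s.Nonempty then s.inf' h f else 0

section FinMin

variable {α : Type*} {s t : Finset α} {f g : α → ℤ}

theorem finMin_of_nonempty (h : s.Nonempty) : finMin s f = s.inf' h f := dif_pos h

theorem finMin_congr_add (h : s.Nonempty) {c : ℤ} (hfg : ∀ a ∈ s, f a = g a + c) :
    finMin s f = finMin s g + c := by
  rw [finMin_of_nonempty h, finMin_of_nonempty h,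
    Finset.apply_inf'_eq_inf'_comp h (· + c) fun x y => (min_add_add_right x y c).symm]
  exact Finset.inf'_congr h rfl hfg

theorem finMin_le_finMin_of_subset (h : s.Nonempty) (hst : s ⊆ t) :
    finMin t f ≤ finMin s f := by
  rw [finMin_of_nonempty h, finMin_of_nonempty (h.mono hst)]
  exact Finset.inf'_mono f hst h

theorem finMin_nonneg (hf : ∀ a ∈ s, 0 ≤ f a) : 0 ≤ finMin s f := by
  unfold finMin
  split_ifs with h
  · exact Finset.le_inf' h f hf
  · exact le_rfl

@[simp] theorem finMin_singleton (a : α) : finMin {a} f = f a := by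
  rw [finMin_of_nonempty (Finset.singleton_nonempty a), Finset.inf'_singleton]

end FinMin

theorem IsMonge.sub_le_sub_succ {n m : ℕ} {M : ℕ → ℕ → ℤ} (hM : IsMonge n m M) {i j j' : ℕ}
    (hi : 1 ≤ i) (hin : i + 1 ≤ n) (hj : 1 ≤ j) (hjj' : j ≤ j') (hj' : j' ≤ m) :
    M i j' - M i j ≤ M (i + 1) j' - M (i + 1) j := by
  induction j', hjj' using Nat.le_induction with
  | base => simp
  | succ j' hjj' ih =>
    have := hM i j' hi hin (by omega) hj'
    linarith [ih (by omega)]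

theorem IsMonge.sub_le_sub {n m : ℕ} {M : ℕ → ℕ → ℤ} (hM : IsMonge n m M) {i i' j j' : ℕ}
    (hi : 1 ≤ i) (hii' : i ≤ i') (hi' : i' ≤ n) (hj : 1 ≤ j) (hjj' : j ≤ j') (hj' : j' ≤ m) :
    M i j' - M i j ≤ M i' j' - M i' j := by
  induction i', hii' using Nat.le_induction with
  | base => exact le_rfl
  | succ i' hii' ih =>
    exact (ih (by omega)).trans (hM.sub_le_sub_succ (by omega) hi' hj hjj' hj')

theorem IsUnitMonge.abs_sub_le_sub {n m : ℕ} {M : ℕ → ℕ → ℤ} (hM : IsUnitMonge n m M)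
    {i i' j : ℕ} (hi : 1 ≤ i) (hii' : i ≤ i') (hi' : i' ≤ n) (hj : 1 ≤ j) (hjm : j ≤ m) :
    |M i' j - M i j| ≤ i' - i := by
  induction i', hii' using Nat.le_induction with
  | base => simp
  | succ i' hii' ih =>
    have hstep : |M (i' + 1) j - M i' j| ≤ 1 := by
      rcases hM.2 i' j (by omega) hi' hj hjm with h | h | h <;> rw [h] <;> norm_num
    calc |M (i' + 1) j - M i j| ≤ |M (i' + 1) j - M i' j| + |M i' j - M i j| :=
          abs_sub_le _ _ _
      _ ≤ 1 + (i' - i) := add_le_add hstep (ih (by omega))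
      _ = ((i' + 1 : ℕ) : ℤ) - i := by push_cast; ring

theorem card_image_le_of_factor {α β γ : Type*} [DecidableEq γ] {s : Finset α} {t : Finset β}
    {f : α → γ} (g : α → β) (φ : β → γ) (hg : ∀ a ∈ s, g a ∈ t) (hf : ∀ a ∈ s, f a = φ (g a)) :
    (s.image f).card ≤ t.card := by
  classical
  refine (Finset.card_le_card fun y hy => ?_).trans (Finset.card_image_le (s := t) (f := φ))
  obtain ⟨a, ha, rfl⟩ := Finset.mem_image.1 hy
  exact Finset.mem_image.2 ⟨g a, hg a ha, (hf a ha).symm⟩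

theorem card_Icc_neg_two_pow (m : ℕ) :
    (Finset.Icc (-(2 : ℤ) ^ m) (2 ^ m)).card = 2 * 2 ^ m + 1 := by
  rw [Int.card_Icc, show (2 : ℤ) ^ m + 1 - -2 ^ m = ((2 * 2 ^ m + 1 : ℕ) : ℤ) by push_cast; ring,
    Int.toNat_natCast]

namespace MongeEmulator

def blockLo (ℓ x : ℕ) : ℕ := x * 2 ^ ℓ + 1

def blockHi (n ℓ x : ℕ) : ℕ := min ((x + 1) * 2 ^ ℓ) n

def block (n ℓ x : ℕ) : Finset ℕ := Finset.Icc (blockLo ℓ x) (blockHi n ℓ x)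

def blockIndex (ℓ i : ℕ) : ℕ := (i - 1) / 2 ^ ℓ

section Blocks

variable {n ℓ x i : ℕ}

theorem mem_block_blockIndex (hi : 1 ≤ i) (hin : i ≤ n) : i ∈ block n ℓ (blockIndex ℓ i) := by
  have hlo := Nat.div_mul_le_self (i - 1) (2 ^ ℓ)
  have hhi := Nat.lt_div_mul_add (a := i - 1) (Nat.two_pow_pos ℓ)
  simp only [block, blockLo, blockHi, blockIndex, Finset.mem_Icc, le_min_iff, add_mul, one_mul]
  omega

theorem blockIndex_succ : blockIndex (ℓ + 1) i = blockIndex ℓ i / 2 := by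
  rw [blockIndex, blockIndex, Nat.div_div_eq_div_mul, pow_succ]

theorem blockIndex_eq_zero (hi : i ≤ 2 ^ ℓ) : blockIndex ℓ i = 0 :=
  Nat.div_eq_of_lt (by have := Nat.two_pow_pos ℓ; omega)

theorem block_subset_parent : block n ℓ x ⊆ block n (ℓ + 1) (x / 2) := by
  have h2 := Nat.div_mul_le_self x 2
  have hx : x + 1 ≤ (x / 2 + 1) * 2 := by omega
  apply Finset.Icc_subset_Icc
  · simp only [blockLo, pow_succ', ← mul_assoc]
    exact Nat.succ_le_succ (Nat.mul_le_mul_right _ h2)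
  · simp only [blockHi, pow_succ', ← mul_assoc]
    exact min_le_min_right n (Nat.mul_le_mul_right _ hx)

theorem block_subset_Icc : block n ℓ x ⊆ Finset.Icc 1 n :=
  Finset.Icc_subset_Icc (Nat.le_add_left 1 _) (min_le_right _ _)

theorem block_zero_blockIndex (hi : 1 ≤ i) (hin : i ≤ n) : block n 0 (blockIndex 0 i) = {i} := by
  simp only [block, blockLo, blockHi, blockIndex, pow_zero, Nat.div_one, mul_one]
  rw [Nat.sub_add_cancel hi, min_eq_left hin, Finset.Icc_self]

theorem block_blockIndex_nonempty (hi : i ∈ Finset.Icc 1 n) :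
    (block n ℓ (blockIndex ℓ i)).Nonempty :=
  ⟨i, mem_block_blockIndex (Finset.mem_Icc.1 hi).1 (Finset.mem_Icc.1 hi).2⟩

theorem block_blockIndex_subset_succ :
    block n ℓ (blockIndex ℓ i) ⊆ block n (ℓ + 1) (blockIndex (ℓ + 1) i) :=
  blockIndex_succ ▸ block_subset_parent

theorem card_image_blockIndex_le (n ℓ : ℕ) :
    ((Finset.Icc 1 n).image (blockIndex ℓ)).card ≤ (n - 1) / 2 ^ ℓ + 1 := by
  refine (Finset.card_le_card fun x hx => ?_).trans (Finset.card_range _).le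
  obtain ⟨i, hi, rfl⟩ := Finset.mem_image.1 hx
  have := Nat.div_le_div_right (c := 2 ^ ℓ) (Nat.sub_le_sub_right (Finset.mem_Icc.1 hi).2 1)
  exact Finset.mem_range.2 (Nat.lt_succ_of_le this)

end Blocks

def signature (n : ℕ) (M : ℕ → ℕ → ℤ) (ℓ x j : ℕ) : ℤ := M (blockHi n ℓ x) j - M (blockLo ℓ x) j

section Signature

variable {n : ℕ} {M : ℕ → ℕ → ℤ} {ℓ x j j' : ℕ}

theorem abs_signature_le (hM : IsUnitMonge n n M) (hj : j ∈ Finset.Icc 1 n)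
    (hx : (block n ℓ x).Nonempty) : |signature n M ℓ x j| ≤ 2 ^ ℓ := by
  have hle : blockLo ℓ x ≤ blockHi n ℓ x := Finset.nonempty_Icc.1 hx
  have hlen : blockHi n ℓ x ≤ x * 2 ^ ℓ + 2 ^ ℓ := by
    simp only [blockHi, add_mul, one_mul]; exact min_le_left _ _
  rw [Finset.mem_Icc] at hj
  have := hM.abs_sub_le_sub (Nat.le_add_left 1 _) hle (min_le_right _ _) hj.1 hj.2
  refine this.trans ?_
  simp only [blockLo] at hle hlen ⊢
  have : (blockHi n ℓ x : ℤ) ≤ x * 2 ^ ℓ + 2 ^ ℓ := by exact_mod_cast hlen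
  push_cast
  linarith

/-- Columns of equal signature differ by a constant on the whole block: their difference is
monotone down the rows (Monge) and takes the same value at both ends. -/
theorem exists_shift_of_signature_eq (hM : IsMonge n n M) (hj : j ∈ Finset.Icc 1 n)
    (hj' : j' ∈ Finset.Icc 1 n) (hs : signature n M ℓ x j = signature n M ℓ x j') :
    ∃ c, ∀ i ∈ block n ℓ x, M i j = M i j' + c := by
  refine ⟨M (blockLo ℓ x) j - M (blockLo ℓ x) j', fun i hi => ?_⟩
  rw [block, Finset.mem_Icc] at hi
  rw [Finset.mem_Icc] at hj hj'
  have hlo : 1 ≤ blockLo ℓ x := Nat.le_add_left 1 _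
  have hhi : blockHi n ℓ x ≤ n := min_le_right _ _
  unfold signature at hs
  rcases le_total j j' with h | h
  · have h1 := hM.sub_le_sub hlo hi.1 (hi.2.trans hhi) hj.1 h hj'.2
    have h2 := hM.sub_le_sub (hlo.trans hi.1) hi.2 hhi hj.1 h hj'.2
    linarith
  · have h1 := hM.sub_le_sub hlo hi.1 (hi.2.trans hhi) hj'.1 h hj.2
    have h2 := hM.sub_le_sub (hlo.trans hi.1) hi.2 hhi hj'.1 h hj.2
    linarith

theorem signature_eq_of_shift (hx : (block n ℓ x).Nonempty) {c : ℤ}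
    (h : ∀ i ∈ block n ℓ x, M i j = M i j' + c) : signature n M ℓ x j = signature n M ℓ x j' := by
  have hle : blockLo ℓ x ≤ blockHi n ℓ x := Finset.nonempty_Icc.1 hx
  rw [signature, signature, h _ (Finset.right_mem_Icc.2 hle), h _ (Finset.left_mem_Icc.2 hle)]
  ring

theorem signature_eq_of_parent (hM : IsMonge n n M) (hj : j ∈ Finset.Icc 1 n)
    (hj' : j' ∈ Finset.Icc 1 n) (hx : (block n ℓ x).Nonempty)
    (hs : signature n M (ℓ + 1) (x / 2) j = signature n M (ℓ + 1) (x / 2) j') :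
    signature n M ℓ x j = signature n M ℓ x j' := by
  obtain ⟨c, hc⟩ := exists_shift_of_signature_eq hM hj hj' hs
  exact signature_eq_of_shift hx fun i hi => hc i (block_subset_parent hi)

end Signature

noncomputable def classRep (n : ℕ) (M : ℕ → ℕ → ℤ) (ℓ x : ℕ) (s : ℤ) : ℕ :=
  sInf {j | j ∈ Finset.Icc 1 n ∧ signature n M ℓ x j = s}

noncomputable def rep (n : ℕ) (M : ℕ → ℕ → ℤ) (ℓ x j : ℕ) : ℕ :=
  classRep n M ℓ x (signature n M ℓ x j)

section Rep

variable {n : ℕ} {M : ℕ → ℕ → ℤ} {ℓ x j : ℕ}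

theorem rep_spec (hj : j ∈ Finset.Icc 1 n) :
    rep n M ℓ x j ∈ Finset.Icc 1 n ∧ signature n M ℓ x (rep n M ℓ x j) = signature n M ℓ x j :=
  Nat.sInf_mem (s := {j' | j' ∈ Finset.Icc 1 n ∧ signature n M ℓ x j' = signature n M ℓ x j})
    ⟨j, hj, rfl⟩

theorem exists_shift_rep (hM : IsMonge n n M) (hj : j ∈ Finset.Icc 1 n) :
    ∃ c, ∀ i ∈ block n ℓ x, M i (rep n M ℓ x j) = M i j + c :=
  exists_shift_of_signature_eq hM (rep_spec hj).1 hj (rep_spec hj).2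

theorem rep_rep_parent (hM : IsMonge n n M) (hj : j ∈ Finset.Icc 1 n)
    (hx : (block n ℓ x).Nonempty) :
    rep n M ℓ x (rep n M (ℓ + 1) (x / 2) j) = rep n M ℓ x j := by
  have h := rep_spec (M := M) (ℓ := ℓ + 1) (x := x / 2) hj
  rw [rep, signature_eq_of_parent hM h.1 hj hx h.2]
  rfl

end Rep

inductive Vertex
  | row (i : ℕ)
  | col (j : ℕ)
  | node (ℓ x ρ : ℕ)

namespace Vertex

def code : Vertex → ℕ
  | row i => Nat.pair 0 i
  | col j => Nat.pair 1 j
  | node ℓ x ρ => Nat.pair 2 (Nat.pair ℓ (Nat.pair x ρ))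

def decode (m : ℕ) : Vertex :=
  match m.unpair with
  | (0, i) => row i
  | (1, j) => col j
  | (_, t) => node t.unpair.1 t.unpair.2.unpair.1 t.unpair.2.unpair.2

@[simp] theorem decode_code (v : Vertex) : decode v.code = v := by
  cases v <;> simp [code, decode]

end Vertex

def height (n : ℕ) : ℕ := Nat.clog 2 n

def blockMin (n : ℕ) (M : ℕ → ℕ → ℤ) (ℓ x ρ : ℕ) : ℤ := finMin (block n ℓ x) (M · ρ)

/-- `node ℓ x ρ` stands for the class of column `ρ` at the block `(ℓ, x)`; the weights are
chosen so that the path to it from a row `i` of the block weighs `M i ρ - blockMin n M ℓ x ρ`. -/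
def weight (n : ℕ) (M : ℕ → ℕ → ℤ) : Vertex → Vertex → ℤ
  | .node ℓ x _, .node ℓ' x' ρ' => blockMin n M ℓ x ρ' - blockMin n M ℓ' x' ρ'
  | _, .col j => blockMin n M (height n) 0 j
  | _, _ => 0

/-- The least value of `d(row i, v) - M i j` over the rows `i` below `v`; by the triangle
inequality it grows along an edge by at most the weight of the edge. -/
def potential (n : ℕ) (M : ℕ → ℕ → ℤ) (j : ℕ) : Vertex → ℤ
  | .row i => -M i j
  | .col j' => finMin (block n (height n) 0) fun i => M i j' - M i j
  | .node ℓ x ρ => finMin (block n ℓ x) (fun i => M i ρ - M i j) - blockMin n M ℓ x ρ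

def rank (n : ℕ) : Vertex → ℕ
  | .row _ => 0
  | .node ℓ _ _ => ℓ + 1
  | .col _ => height n + 2

noncomputable def nodeOn (n : ℕ) (M : ℕ → ℕ → ℤ) (i j ℓ : ℕ) : Vertex :=
  .node ℓ (blockIndex ℓ i) (rep n M ℓ (blockIndex ℓ i) j)

noncomputable def pathVertex (n : ℕ) (M : ℕ → ℕ → ℤ) (i j : ℕ) : ℕ → Vertex
  | 0 => .row i
  | k + 1 => if k ≤ height n then nodeOn n M i j k else .col j

section Path

variable {n : ℕ} {M : ℕ → ℕ → ℤ} {i j j' k ℓ : ℕ}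

theorem pathVertex_succ (h : ℓ ≤ height n) : pathVertex n M i j (ℓ + 1) = nodeOn n M i j ℓ :=
  if_pos h

theorem pathVertex_height_add_two : pathVertex n M i j (height n + 2) = .col j :=
  if_neg (by omega)

theorem rank_pathVertex (hk : k ≤ height n + 2) : rank n (pathVertex n M i j k) = k := by
  rcases k with _ | k
  · rfl
  · by_cases h : k ≤ height n
    · rw [pathVertex_succ h, nodeOn, rank]
    · rw [show k = height n + 1 by omega, pathVertex_height_add_two, rank]

theorem le_two_pow_height (n : ℕ) : n ≤ 2 ^ height n := Nat.le_pow_clog one_lt_two n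

theorem nodeOn_height (hi : i ≤ n) :
    nodeOn n M i j (height n) = .node (height n) 0 (rep n M (height n) 0 j) := by
  rw [nodeOn, blockIndex_eq_zero (hi.trans (le_two_pow_height n))]

theorem pathVertex_step_cases {P : Vertex → Vertex → Prop} (hk : k < height n + 2)
    (entry : P (.row i) (nodeOn n M i j 0))
    (climb : ∀ ℓ < height n, P (nodeOn n M i j ℓ) (nodeOn n M i j (ℓ + 1)))
    (exit : P (nodeOn n M i j (height n)) (.col j)) :
    P (pathVertex n M i j k) (pathVertex n M i j (k + 1)) := by
  rcases k with _ | ℓ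
  · rwa [pathVertex_succ (Nat.zero_le _)]
  · rcases Nat.lt_or_ge ℓ (height n) with hℓ | hℓ
    · rw [pathVertex_succ hℓ.le, pathVertex_succ hℓ]
      exact climb ℓ hℓ
    · obtain rfl : ℓ = height n := by omega
      rwa [pathVertex_succ le_rfl, pathVertex_height_add_two]

theorem weight_nodeOn_succ_nonneg (hi : i ∈ Finset.Icc 1 n) :
    0 ≤ weight n M (nodeOn n M i j ℓ) (nodeOn n M i j (ℓ + 1)) := by
  have hne := block_blockIndex_nonempty (ℓ := ℓ) hi
  have hsub := block_blockIndex_subset_succ (n := n) (ℓ := ℓ) (i := i)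
  simp only [nodeOn, weight, blockMin, sub_nonneg]
  exact finMin_le_finMin_of_subset hne hsub

theorem weight_nodeOn_succ (hM : IsMonge n n M) (hi : i ∈ Finset.Icc 1 n)
    (hj : j ∈ Finset.Icc 1 n) :
    weight n M (nodeOn n M i j ℓ) (nodeOn n M i j (ℓ + 1)) =
      blockMin n M ℓ (blockIndex ℓ i) j - blockMin n M (ℓ + 1) (blockIndex (ℓ + 1) i) j := by
  have hne := block_blockIndex_nonempty (ℓ := ℓ) hi
  have hsub := block_blockIndex_subset_succ (n := n) (ℓ := ℓ) (i := i)
  obtain ⟨c, hc⟩ := exists_shift_rep (ℓ := ℓ + 1) (x := blockIndex (ℓ + 1) i) hM hj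
  simp only [nodeOn, weight, blockMin]
  rw [finMin_congr_add hne fun i hi => hc i (hsub hi), finMin_congr_add (hne.mono hsub) hc]
  ring

theorem potential_nodeOn_zero (hi : i ∈ Finset.Icc 1 n) :
    potential n M j (nodeOn n M i j' 0) = potential n M j (.row i) := by
  rw [Finset.mem_Icc] at hi
  simp only [nodeOn, potential, blockMin, block_zero_blockIndex hi.1 hi.2, finMin_singleton]
  ring

theorem potential_nodeOn_succ_le (hM : IsMonge n n M) (hi : i ∈ Finset.Icc 1 n)
    (hj' : j' ∈ Finset.Icc 1 n) :
    potential n M j (nodeOn n M i j' (ℓ + 1)) ≤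
      potential n M j (nodeOn n M i j' ℓ) +
        weight n M (nodeOn n M i j' ℓ) (nodeOn n M i j' (ℓ + 1)) := by
  have hne := block_blockIndex_nonempty (ℓ := ℓ) hi
  have hsub := block_blockIndex_subset_succ (n := n) (ℓ := ℓ) (i := i)
  obtain ⟨c, hc⟩ := exists_shift_rep (ℓ := ℓ) (x := blockIndex ℓ i) hM hj'
  obtain ⟨c', hc'⟩ := exists_shift_rep (ℓ := ℓ + 1) (x := blockIndex (ℓ + 1) i) hM hj'
  simp only [nodeOn, potential, weight, blockMin]
  set ρ := rep n M ℓ (blockIndex ℓ i) j'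
  set ρ' := rep n M (ℓ + 1) (blockIndex (ℓ + 1) i) j'
  have hshift : ∀ r ∈ block n ℓ (blockIndex ℓ i), M r ρ = M r ρ' + (c - c') := fun r hr => by
    rw [hc r hr, hc' r (hsub hr)]; ring
  rw [finMin_congr_add hne hshift, finMin_congr_add hne (f := fun r => M r ρ - M r j)
    (g := fun r => M r ρ' - M r j) (c := c - c') fun r hr => by rw [hshift r hr]; ring]
  have := finMin_le_finMin_of_subset hne hsub (f := fun r => M r ρ' - M r j)
  linarith

theorem potential_col (hM : IsMonge n n M) (hi : i ∈ Finset.Icc 1 n)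
    (hj' : j' ∈ Finset.Icc 1 n) :
    potential n M j (.col j') =
      potential n M j (nodeOn n M i j' (height n)) +
        weight n M (nodeOn n M i j' (height n)) (.col j') := by
  have hne : (block n (height n) 0).Nonempty := by
    have hne := block_blockIndex_nonempty (ℓ := height n) hi
    rwa [blockIndex_eq_zero ((Finset.mem_Icc.1 hi).2.trans (le_two_pow_height n))] at hne
  obtain ⟨c, hc⟩ := exists_shift_rep (ℓ := height n) (x := 0) hM hj'
  rw [nodeOn_height (Finset.mem_Icc.1 hi).2]
  simp only [potential, weight, blockMin]
  rw [finMin_congr_add hne hc,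
    finMin_congr_add hne (f := fun r => M r (rep n M (height n) 0 j') - M r j)
      (g := fun r => M r j' - M r j) fun r hr => by rw [hc r hr]; ring]
  ring

theorem weight_pathVertex_nonneg (hpos : ∀ i j, 1 ≤ i → i ≤ n → 1 ≤ j → j ≤ n → 0 ≤ M i j)
    (hi : i ∈ Finset.Icc 1 n) (hj : j ∈ Finset.Icc 1 n) (hk : k < height n + 2) :
    0 ≤ weight n M (pathVertex n M i j k) (pathVertex n M i j (k + 1)) := by
  refine pathVertex_step_cases (P := fun u v => 0 ≤ weight n M u v) hk
    (by simp [nodeOn, weight]) (fun _ _ => weight_nodeOn_succ_nonneg hi) ?_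
  rw [nodeOn, weight]
  refine finMin_nonneg fun r hr => ?_
  obtain ⟨hr1, hrn⟩ := Finset.mem_Icc.1 (block_subset_Icc hr)
  exact hpos r j hr1 hrn (Finset.mem_Icc.1 hj).1 (Finset.mem_Icc.1 hj).2

theorem potential_pathVertex_succ_le (hM : IsMonge n n M) (hi : i ∈ Finset.Icc 1 n)
    (hj' : j' ∈ Finset.Icc 1 n) (hk : k < height n + 2) :
    potential n M j (pathVertex n M i j' (k + 1)) ≤
      potential n M j (pathVertex n M i j' k) +
        weight n M (pathVertex n M i j' k) (pathVertex n M i j' (k + 1)) :=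
  pathVertex_step_cases (P := fun u v => potential n M j v ≤ potential n M j u + weight n M u v)
    hk (by rw [potential_nodeOn_zero hi]; simp [nodeOn, weight])
    (fun _ _ => potential_nodeOn_succ_le hM hi hj') (potential_col hM hi hj').le

theorem sum_weight_pathVertex (hM : IsMonge n n M) (hi : i ∈ Finset.Icc 1 n)
    (hj : j ∈ Finset.Icc 1 n) :
    ∑ k ∈ Finset.range (height n + 2),
      weight n M (pathVertex n M i j k) (pathVertex n M i j (k + 1)) = M i j := by
  have hclimb : ∀ ℓ ∈ Finset.range (height n),
      weight n M (pathVertex n M i j (ℓ + 1)) (pathVertex n M i j (ℓ + 1 + 1)) =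
        blockMin n M ℓ (blockIndex ℓ i) j - blockMin n M (ℓ + 1) (blockIndex (ℓ + 1) i) j := by
    intro ℓ hℓ
    rw [Finset.mem_range] at hℓ
    rw [pathVertex_succ hℓ.le, pathVertex_succ hℓ]
    exact weight_nodeOn_succ hM hi hj
  rw [Finset.mem_Icc] at hi
  rw [Finset.sum_range_succ, Finset.sum_range_succ', Finset.sum_congr rfl hclimb,
    Finset.sum_range_sub', pathVertex_succ le_rfl, pathVertex_height_add_two, nodeOn_height hi.2,
    blockIndex_eq_zero (hi.2.trans (le_two_pow_height n))]
  simp [pathVertex, nodeOn, weight, blockMin, block_zero_blockIndex hi.1 hi.2]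

end Path

noncomputable def pathEdge (n : ℕ) (M : ℕ → ℕ → ℤ) (i j k : ℕ) : ℕ × ℕ :=
  ((pathVertex n M i j k).code, (pathVertex n M i j (k + 1)).code)

noncomputable def edgeLayer (n : ℕ) (M : ℕ → ℕ → ℤ) (k : ℕ) : Finset (ℕ × ℕ) :=
  (Finset.Icc 1 n ×ˢ Finset.Icc 1 n).image fun p => pathEdge n M p.1 p.2 k

noncomputable def emulator (n : ℕ) (M : ℕ → ℕ → ℤ) : WDigraph :=
  .ofEdges ((Finset.range (height n + 2)).biUnion (edgeLayer n M))
    fun e => weight n M (Vertex.decode e.1) (Vertex.decode e.2)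

section Emulator

variable {n : ℕ} {M : ℕ → ℕ → ℤ} {i j k : ℕ}

theorem forall_mem_emulator_edges {p : ℕ × ℕ → Prop}
    (h : ∀ i ∈ Finset.Icc 1 n, ∀ j ∈ Finset.Icc 1 n, ∀ k < height n + 2,
      p (pathEdge n M i j k)) :
    ∀ e ∈ (emulator n M).E, p e := by
  intro e he
  simp only [emulator, WDigraph.ofEdges, edgeLayer, Finset.mem_biUnion, Finset.mem_image,
    Finset.mem_product, Finset.mem_range] at he
  obtain ⟨k, hk, ⟨i, j⟩, ⟨hi, hj⟩, rfl⟩ := he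
  exact h i hi j hj k hk

theorem pathEdge_mem_emulator (hi : i ∈ Finset.Icc 1 n) (hj : j ∈ Finset.Icc 1 n)
    (hk : k < height n + 2) : pathEdge n M i j k ∈ (emulator n M).E :=
  Finset.mem_biUnion.2 ⟨k, Finset.mem_range.2 hk,
    Finset.mem_image.2 ⟨(i, j), Finset.mem_product.2 ⟨hi, hj⟩, rfl⟩⟩

theorem code_pathVertex_mem_emulator (hi : i ∈ Finset.Icc 1 n) (hj : j ∈ Finset.Icc 1 n)
    (hk : k ≤ height n + 2) : (pathVertex n M i j k).code ∈ (emulator n M).V := by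
  rcases hk.lt_or_eq with hk | rfl
  · exact (emulator n M).edge_fst _ (pathEdge_mem_emulator hi hj hk)
  · exact (emulator n M).edge_snd _ (pathEdge_mem_emulator (k := height n + 1) hi hj (by omega))

theorem isWalkFromTo_emulator (hi : i ∈ Finset.Icc 1 n) (hj : j ∈ Finset.Icc 1 n) :
    IsWalkFromTo (emulator n M)
      ((List.range (height n + 3)).map fun k => (pathVertex n M i j k).code)
      (Vertex.row i).code (Vertex.col j).code := by
  have := isWalkFromTo_map_range (H := emulator n M) (fun k => (pathVertex n M i j k).code)
    (height n + 2) (fun _ hk => code_pathVertex_mem_emulator hi hj hk)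
    (fun _ hk => pathEdge_mem_emulator hi hj hk)
  rwa [pathVertex_height_add_two] at this

theorem rank_lt_emulator :
    ∀ e ∈ (emulator n M).E, rank n (Vertex.decode e.1) < rank n (Vertex.decode e.2) :=
  forall_mem_emulator_edges fun _ _ _ _ k hk => by
    simp [pathEdge, rank_pathVertex hk.le, rank_pathVertex (k := k + 1) hk]

theorem weight_nonneg_emulator (hpos : ∀ i j, 1 ≤ i → i ≤ n → 1 ≤ j → j ≤ n → 0 ≤ M i j) :
    ∀ e ∈ (emulator n M).E, 0 ≤ (emulator n M).w e :=
  forall_mem_emulator_edges fun _ hi _ hj _ hk => by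
    simpa [emulator, WDigraph.ofEdges, pathEdge] using weight_pathVertex_nonneg hpos hi hj hk

theorem potential_le_emulator (hM : IsMonge n n M) :
    ∀ e ∈ (emulator n M).E, potential n M j (Vertex.decode e.2) ≤
      potential n M j (Vertex.decode e.1) + (emulator n M).w e :=
  forall_mem_emulator_edges fun _ hi _ hj' _ hk => by
    simpa [emulator, WDigraph.ofEdges, pathEdge] using potential_pathVertex_succ_le hM hi hj' hk

theorem hasDistW_emulator (hM : IsMonge n n M) (hi : i ∈ Finset.Icc 1 n)
    (hj : j ∈ Finset.Icc 1 n) :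
    HasDistW (emulator n M) (emulator n M).w (Vertex.row i).code (Vertex.col j).code (M i j) :=
  hasDistW_of_potential (rank n ∘ Vertex.decode) rank_lt_emulator
    (potential n M j ∘ Vertex.decode) (potential_le_emulator hM) (isWalkFromTo_emulator hi hj)
    (by
      rw [walkWeight_map_range]
      simpa [emulator, WDigraph.ofEdges] using sum_weight_pathVertex hM hi hj)
    (by
      have := finMin_nonneg (s := block n (height n) 0) (f := fun r => M r j - M r j)
        fun _ _ => (sub_self _).ge
      simpa [potential] using this)

end Emulator

section Size

variable {n : ℕ} {M : ℕ → ℕ → ℤ} {ℓ k : ℕ}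

theorem signature_mem_Icc (hM : IsUnitMonge n n M) {i j : ℕ} (hi : i ∈ Finset.Icc 1 n)
    (hj : j ∈ Finset.Icc 1 n) :
    signature n M ℓ (blockIndex ℓ i) j ∈ Finset.Icc (-(2 : ℤ) ^ ℓ) (2 ^ ℓ) := by
  rw [Finset.mem_Icc] at hi
  exact Finset.mem_Icc.2 (abs_le.1 (abs_signature_le hM hj ⟨i, mem_block_blockIndex hi.1 hi.2⟩))

theorem card_edgeLayer_zero_le (hM : IsUnitMonge n n M) : (edgeLayer n M 0).card ≤ 3 * n := by
  refine (card_image_le_of_factor (t := (Finset.Icc 1 n).image (blockIndex 0) ×ˢ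
      Finset.Icc (-(2 : ℤ) ^ 0) (2 ^ 0))
    (fun p => (blockIndex 0 p.1, signature n M 0 (blockIndex 0 p.1) p.2))
    (fun q => ((Vertex.row (q.1 + 1)).code, (Vertex.node 0 q.1 (classRep n M 0 q.1 q.2)).code))
    (fun p hp => ?_) (fun p hp => ?_)).trans ?_
  · obtain ⟨hi, hj⟩ := Finset.mem_product.1 hp
    exact Finset.mem_product.2 ⟨Finset.mem_image_of_mem _ hi, signature_mem_Icc hM hi hj⟩
  · have hi := (Finset.mem_Icc.1 (Finset.mem_product.1 hp).1).1
    simp only [pathEdge, pathVertex_succ (Nat.zero_le _), nodeOn, rep]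
    simp only [blockIndex, pow_zero, Nat.div_one, Nat.sub_add_cancel hi, pathVertex]
  · rw [Finset.card_product, card_Icc_neg_two_pow, pow_zero, mul_comm]
    exact Nat.mul_le_mul_left 3 (Finset.card_image_le.trans (by simp))

/-- A climbing edge out of block `x` is determined by `x` and the signature of its column at the
parent block, since equal signatures there force equal signatures at `x`. -/
theorem card_edgeLayer_succ_le (hM : IsUnitMonge n n M) (hℓ : ℓ < height n) :
    (edgeLayer n M (ℓ + 1)).card ≤ 9 * n := by
  refine (card_image_le_of_factor (t := (Finset.Icc 1 n).image (blockIndex ℓ) ×ˢ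
      Finset.Icc (-(2 : ℤ) ^ (ℓ + 1)) (2 ^ (ℓ + 1)))
    (fun p => (blockIndex ℓ p.1, signature n M (ℓ + 1) (blockIndex (ℓ + 1) p.1) p.2))
    (fun q => ((Vertex.node ℓ q.1 (rep n M ℓ q.1 (classRep n M (ℓ + 1) (q.1 / 2) q.2))).code,
      (Vertex.node (ℓ + 1) (q.1 / 2) (classRep n M (ℓ + 1) (q.1 / 2) q.2)).code))
    (fun p hp => ?_) (fun p hp => ?_)).trans ?_
  · obtain ⟨hi, hj⟩ := Finset.mem_product.1 hp
    exact Finset.mem_product.2 ⟨Finset.mem_image_of_mem _ hi, signature_mem_Icc hM hi hj⟩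
  · obtain ⟨hi, hj⟩ := Finset.mem_product.1 hp
    have hne := block_blockIndex_nonempty (ℓ := ℓ) hi
    simp only [pathEdge, pathVertex_succ hℓ.le, pathVertex_succ hℓ, nodeOn, ← blockIndex_succ]
    rw [← rep, blockIndex_succ, rep_rep_parent hM.1 hj hne]
  · rw [Finset.card_product, card_Icc_neg_two_pow]
    have hcard := card_image_blockIndex_le n ℓ
    have hpow : 2 ^ ℓ < n := Nat.pow_lt_of_lt_clog hℓ
    have hdiv := Nat.div_mul_le_self (n - 1) (2 ^ ℓ)
    have hle : (n - 1) / 2 ^ ℓ ≤ n - 1 := Nat.div_le_self _ _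
    calc ((Finset.Icc 1 n).image (blockIndex ℓ)).card * (2 * 2 ^ (ℓ + 1) + 1)
        ≤ ((n - 1) / 2 ^ ℓ + 1) * (2 * 2 ^ (ℓ + 1) + 1) := Nat.mul_le_mul_right _ hcard
      _ = 4 * ((n - 1) / 2 ^ ℓ * 2 ^ ℓ) + (n - 1) / 2 ^ ℓ + 4 * 2 ^ ℓ + 1 := by ring
      _ ≤ 9 * n := by omega

theorem card_edgeLayer_height_succ_le : (edgeLayer n M (height n + 1)).card ≤ n := by
  refine (card_image_le_of_factor (t := Finset.Icc 1 n) Prod.snd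
    (fun j => ((Vertex.node (height n) 0 (rep n M (height n) 0 j)).code, (Vertex.col j).code))
    (fun p hp => (Finset.mem_product.1 hp).2) (fun p hp => ?_)).trans (by simp)
  simp only [pathEdge, pathVertex_succ le_rfl, pathVertex_height_add_two,
    nodeOn_height (Finset.mem_Icc.1 (Finset.mem_product.1 hp).1).2]

theorem card_edgeLayer_le (hM : IsUnitMonge n n M) (hk : k < height n + 2) :
    (edgeLayer n M k).card ≤ 9 * n := by
  rcases k with _ | ℓ
  · exact (card_edgeLayer_zero_le hM).trans (by omega)
  · rcases Nat.lt_or_ge ℓ (height n) with hℓ | hℓ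
    · exact card_edgeLayer_succ_le hM hℓ
    · obtain rfl : ℓ = height n := by omega
      exact card_edgeLayer_height_succ_le.trans (by omega)

theorem size_emulator_le (hM : IsUnitMonge n n M) :
    (emulator n M).size ≤ 27 * n * (height n + 2) := by
  refine (WDigraph.size_ofEdges_le _ _).trans ?_
  have := (Finset.card_biUnion_le (s := Finset.range (height n + 2)) (t := edgeLayer n M)).trans
    (Finset.sum_le_sum fun k hk => card_edgeLayer_le hM (Finset.mem_range.1 hk))
  rw [Finset.sum_const, Finset.card_range, smul_eq_mul] at this
  nlinarith

theorem height_lt_logb_add_one (hn : 1 ≤ n) : (height n : ℝ) < Real.logb 2 n + 1 := by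
  have h := Nat.ceil_lt_add_one (Real.logb_nonneg one_lt_two (Nat.one_le_cast.2 hn))
  rwa [show (2 : ℝ) = ((2 : ℕ) : ℝ) by norm_num, Real.natCeil_logb_natCast] at h

theorem size_emulator_le_logb (hn : 1 ≤ n) (hM : IsUnitMonge n n M) :
    ((emulator n M).size : ℝ) ≤ 81 * n * (Real.logb 2 n + 1) := by
  have hsize : ((emulator n M).size : ℝ) ≤ 27 * n * (height n + 2) := by
    exact_mod_cast size_emulator_le hM
  have hlog := height_lt_logb_add_one hn
  have hlog0 := Real.logb_nonneg one_lt_two (Nat.one_le_cast.2 hn)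
  have hn0 : (0 : ℝ) ≤ n := n.cast_nonneg
  nlinarith

end Size

end MongeEmulator

open MongeEmulator

theorem nonneg_unitMonge_emulator :
    ∃ C : ℝ, 0 < C ∧
      ∀ (n : ℕ) (M : ℕ → ℕ → ℤ), 2 ≤ n → IsUnitMonge n n M →
        (∀ i j, 1 ≤ i → i ≤ n → 1 ≤ j → j ≤ n → 0 ≤ M i j) →
        ∃ (H : WDigraph) (r c : ℕ → ℕ),
          IsDAG H ∧
          (∀ e ∈ H.E, 0 ≤ H.w e) ∧
          ((H.size : ℝ) ≤ C * (n : ℝ) * (Real.logb 2 (n : ℝ) + 1)) ∧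
          (∀ x, 1 ≤ x → x ≤ n → r x ∈ H.V) ∧
          (∀ y, 1 ≤ y → y ≤ n → c y ∈ H.V) ∧
          (∀ x x', 1 ≤ x → x ≤ n → 1 ≤ x' → x' ≤ n → r x = r x' → x = x') ∧
          (∀ y y', 1 ≤ y → y ≤ n → 1 ≤ y' → y' ≤ n → c y = c y' → y = y') ∧
          (∀ x y, 1 ≤ x → x ≤ n → 1 ≤ y → y ≤ n → r x ≠ c y) ∧
          (∀ i j, 1 ≤ i → i ≤ n → 1 ≤ j → j ≤ n →
            HasDistW H H.w (r i) (c j) (M i j)) := by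
  refine ⟨81, by norm_num, fun n M hn hM hpos => ?_⟩
  have h1 : 1 ∈ Finset.Icc 1 n := Finset.mem_Icc.2 ⟨le_rfl, by omega⟩
  refine ⟨emulator n M, fun i => (Vertex.row i).code, fun j => (Vertex.col j).code,
    isDAG_of_rank (rk := rank n ∘ Vertex.decode) rank_lt_emulator,
    weight_nonneg_emulator hpos, size_emulator_le_logb (by omega) hM,
    fun i hi hin =>
      code_pathVertex_mem_emulator (k := 0) (Finset.mem_Icc.2 ⟨hi, hin⟩) h1 (Nat.zero_le _),
    fun j hj hjn => ?_,
    fun _ _ _ _ _ _ h => by simpa using congrArg Vertex.decode h,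
    fun _ _ _ _ _ _ h => by simpa using congrArg Vertex.decode h,
    fun _ _ _ _ _ _ h => by simpa using congrArg Vertex.decode h,
    fun i j hi hin hj hjn =>
      hasDistW_emulator hM.1 (Finset.mem_Icc.2 ⟨hi, hin⟩) (Finset.mem_Icc.2 ⟨hj, hjn⟩)⟩
  have := code_pathVertex_mem_emulator (M := M) (k := height n + 2) h1
    (Finset.mem_Icc.2 ⟨hj, hjn⟩) le_rfl
  rwa [pathVertex_height_add_two] at this
end

section
/- There is an absolute constant C such that for every n ≥ 2 and every lower triangular unit-Monge matrix M of order n there exists a weighted digraph H that is a DAG, has integer edge weights, has size at most C·n·(log₂ n + 1), and contains 2n distinct distinguished vertices r[1],…,r[n], c[1],…,c[n], such that: for all 1 ≤ j ≤ i ≤ n a directed path from r[i] to c[j] exists and d_H(r[i], c[j]) = M[i,j], while for all 1 ≤ i < j ≤ n there is no directed path from r[i] to c[j] in H. -/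
/-- A lower triangular unit-Monge matrix of order `n` (1-based indexing). -/
def IsLowerTriUnitMonge (n : ℕ) (M : ℕ → ℕ → ℤ) : Prop :=
  (∀ i j, 1 ≤ j → j ≤ i → i + 1 ≤ n →
    M (i + 1) j - M i j = -1 ∨ M (i + 1) j - M i j = 0 ∨ M (i + 1) j - M i j = 1) ∧
  (∀ i j, 1 ≤ j → j < i → i + 1 ≤ n →
    M (i + 1) j - M i j ≤ M (i + 1) (j + 1) - M i (j + 1))


/-!
With `δₖ x = M (k + 1) x - M k x`, row `i` is obtained from the diagonal by the updates
`δⱼ, …, δᵢ₋₁`: `M i j = M j j + ∑_{j ≤ k < i} δₖ j`. The unit-Monge conditions make `δₖ`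
nondecreasing with values in `{-1, 0, 1}` on `[1, k]`, so it jumps at most twice. Keep the rows
as versions of a persistent segment tree over the columns: version `v` copies only the nodes whose
dyadic block contains column `v` or a jump of `δᵥ₋₁`, at most three per level, and every other
child pointer goes to the child's latest version. Since then, every update has been constant on
the child's block, so weighting the pointer by the sum of these constants makes every path from
the root of version `i` to leaf `j` weigh `M i j`.
-/

open Finset

def WDigraph.Adj (H : WDigraph) (x y : ℕ) : Prop := (x, y) ∈ H.E

def WDigraph.IsRanking (H : WDigraph) (rank : ℕ → ℕ) : Prop := ∀ e ∈ H.E, rank e.2 < rank e.1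

def WDigraph.IsPotential (H : WDigraph) (R : ℕ → Prop) (Φ : ℕ → ℤ) : Prop :=
  ∀ e ∈ H.E, R e.2 → R e.1 ∧ H.w e = Φ e.1 - Φ e.2

section Walks

variable {H : WDigraph}

theorem IsWalkFromTo.cons {l : List ℕ} {u v t : ℕ} (huv : (u, v) ∈ H.E)
    (hl : IsWalkFromTo H l v t) : IsWalkFromTo H (u :: l) u t := by
  obtain ⟨⟨hne, hV, hchain⟩, hhead, hlast⟩ := hl
  obtain ⟨v', l', rfl⟩ := List.exists_cons_of_ne_nil hne
  cases Option.some_injective _ hhead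
  refine ⟨⟨List.cons_ne_nil _ _, ?_, List.isChain_cons_cons.2 ⟨huv, hchain⟩⟩, rfl, ?_⟩
  · simpa [H.edge_fst _ huv] using hV
  · simpa [List.getLast?_cons_cons] using hlast

theorem IsWalkFromTo.of_cons_cons {l : List ℕ} {u b t : ℕ}
    (hl : IsWalkFromTo H (u :: b :: l) u t) : (u, b) ∈ H.E ∧ IsWalkFromTo H (b :: l) b t := by
  obtain ⟨⟨-, hV, hchain⟩, -, hlast⟩ := hl
  obtain ⟨hub, hchain⟩ := List.isChain_cons_cons.1 hchain
  exact ⟨hub, ⟨List.cons_ne_nil _ _, fun x hx => hV x (List.mem_cons_of_mem _ hx), hchain⟩, rfl,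
    by simpa [List.getLast?_cons_cons] using hlast⟩

theorem WDigraph.exists_isWalkFromTo {u t : ℕ} (hu : u ∈ H.V)
    (h : Relation.ReflTransGen H.Adj u t) : ∃ l, IsWalkFromTo H l u t := by
  induction h using Relation.ReflTransGen.head_induction_on with
  | refl =>
    exact ⟨[t], ⟨List.cons_ne_nil _ _, by simpa using hu, List.isChain_singleton _⟩, rfl, rfl⟩
  | head hcd _ ih =>
    obtain ⟨l, hl⟩ := ih (H.edge_snd _ hcd)
    exact ⟨_, hl.cons hcd⟩

theorem IsWalk.nodup_of_rank {rank : ℕ → ℕ} (hrank : H.IsRanking rank)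
    {l : List ℕ} (hl : IsWalk H l) : l.Nodup := by
  have hchain : (l.map rank).IsChain (· > ·) :=
    (List.isChain_map rank).2 (hl.2.2.imp fun _ _ h => hrank _ h)
  exact List.Nodup.of_map rank (hchain.pairwise.imp fun h => h.ne')

theorem WDigraph.IsRanking.isDAG {rank : ℕ → ℕ} (hrank : H.IsRanking rank) : IsDAG H := by
  rintro ⟨v, l, hlen, hwalk, hhead, hlast⟩
  match l, hlen, hwalk.nodup_of_rank hrank with
  | a :: b :: l, _, hnd =>
    cases Option.some_injective _ hhead
    rw [List.getLast?_cons_cons] at hlast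
    exact (List.nodup_cons.1 hnd).1 (List.mem_of_getLast? hlast)

theorem IsWalkFromTo.weight_eq_potential {R : ℕ → Prop} {Φ : ℕ → ℤ}
    (hpot : H.IsPotential R Φ)
    {l : List ℕ} {u t : ℕ} (hl : IsWalkFromTo H l u t) (ht : R t) :
    R u ∧ walkWeight H.w l = Φ u - Φ t := by
  induction l generalizing u with
  | nil => exact absurd rfl hl.1.1
  | cons a l ih =>
    cases Option.some_injective _ hl.2.1
    cases l with
    | nil =>
      cases Option.some_injective _ hl.2.2
      exact ⟨ht, by simp [walkWeight]⟩
    | cons b l =>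
      obtain ⟨hab, htail⟩ := hl.of_cons_cons
      obtain ⟨hRb, hwb⟩ := ih htail
      obtain ⟨hRa, hwab⟩ := hpot _ hab hRb
      refine ⟨hRa, ?_⟩
      have : walkWeight H.w (a :: b :: l) = H.w (a, b) + walkWeight H.w (b :: l) := by
        simp [walkWeight]
      rw [this, hwab, hwb]
      ring

theorem WDigraph.hasDistW_of_potential {rank : ℕ → ℕ} (hrank : H.IsRanking rank)
    {R : ℕ → Prop} {Φ : ℕ → ℤ} (hpot : H.IsPotential R Φ)
    {u t : ℕ} (hu : u ∈ H.V) (hreach : Relation.ReflTransGen H.Adj u t) (ht : R t) :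
    HasDistW H H.w u t (Φ u - Φ t) := by
  obtain ⟨l, hl⟩ := H.exists_isWalkFromTo hu hreach
  exact ⟨⟨l, ⟨hl, hl.1.nodup_of_rank hrank⟩, (hl.weight_eq_potential hpot ht).2⟩,
    fun l' hl' => ((hl'.1.weight_eq_potential hpot ht).2).ge⟩

theorem WDigraph.not_exists_path_of_potential {R : ℕ → Prop} {Φ : ℕ → ℤ}
    (hpot : H.IsPotential R Φ)
    {u t : ℕ} (ht : R t) (hu : ¬ R u) : ¬ ∃ l, IsPathFromTo H l u t :=
  fun ⟨_, hl⟩ => hu (hl.1.weight_eq_potential hpot ht).1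

end Walks

section OfSucc

open Encodable Denumerable

variable {α : Type*} [Denumerable α] [DecidableEq α]

def WDigraph.ofSucc (V : Finset α) (succ : α → Finset α) (w : α → α → ℤ) : WDigraph where
  V := V.image encode
  E := V.biUnion fun a => ((succ a).filter (· ∈ V)).image fun b => (encode a, encode b)
  w e := w (ofNat α e.1) (ofNat α e.2)
  edge_fst e he := by
    simp only [mem_biUnion, mem_image] at he
    obtain ⟨a, ha, b, -, rfl⟩ := he
    exact mem_image_of_mem _ ha
  edge_snd e he := by
    simp only [mem_biUnion, mem_image, mem_filter] at he
    obtain ⟨a, -, b, ⟨-, hb⟩, rfl⟩ := he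
    exact mem_image_of_mem _ hb

namespace WDigraph

def SuccAdj (V : Finset α) (succ : α → Finset α) (a b : α) : Prop := a ∈ V ∧ b ∈ V ∧ b ∈ succ a

variable {V : Finset α} {succ : α → Finset α} {w : α → α → ℤ}

theorem encode_mem_ofSucc_V {a : α} : encode a ∈ (ofSucc V succ w).V ↔ a ∈ V :=
  encode_injective.mem_finset_image

theorem ofSucc_w (a b : α) : (ofSucc V succ w).w (encode a, encode b) = w a b := by
  simp [ofSucc]

theorem ofSucc_adj {a b : α} (h : SuccAdj V succ a b) :
    (ofSucc V succ w).Adj (encode a) (encode b) :=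
  mem_biUnion.2 ⟨a, h.1, mem_image_of_mem _ (mem_filter.2 ⟨h.2.2, h.2.1⟩)⟩

theorem ofSucc_forall_E {p : ℕ × ℕ → Prop}
    (h : ∀ a ∈ V, ∀ b ∈ succ a, b ∈ V → p (encode a, encode b)) :
    ∀ e ∈ (ofSucc V succ w).E, p e := by
  intro e he
  simp only [ofSucc, mem_biUnion, mem_image, mem_filter] at he
  obtain ⟨a, ha, b, ⟨hab, hb⟩, rfl⟩ := he
  exact h a ha b hab hb

theorem size_ofSucc_le {d : ℕ} (hd : ∀ a, #(succ a) ≤ d) :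
    (ofSucc V succ w).size ≤ (d + 1) * #V := by
  have hV : #(ofSucc V succ w).V ≤ #V := card_image_le
  have hE : #(ofSucc V succ w).E ≤ d * #V := by
    refine card_biUnion_le.trans ?_
    rw [mul_comm, ← smul_eq_mul, ← sum_const]
    exact sum_le_sum fun a _ => card_image_le.trans ((card_filter_le _ _).trans (hd a))
  rw [size]
  linarith

theorem ofSucc_reflTransGen {u t : α} (h : Relation.ReflTransGen (SuccAdj V succ) u t) :
    Relation.ReflTransGen (ofSucc V succ w).Adj (encode u) (encode t) :=
  h.lift encode fun _ _ => ofSucc_adj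

theorem ofSucc_isRanking {rank : α → ℕ} (hrank : ∀ a, ∀ b ∈ succ a, rank b < rank a) :
    (ofSucc V succ w).IsRanking (rank ∘ ofNat α) :=
  ofSucc_forall_E fun a _ b hab _ => by simpa using hrank a b hab

variable {R : α → Prop} {Φ : α → ℤ}

theorem ofSucc_isPotential
    (hpot : ∀ a ∈ V, ∀ b ∈ succ a, b ∈ V → R b → R a ∧ w a b = Φ a - Φ b) :
    (ofSucc V succ w).IsPotential (R ∘ ofNat α) (Φ ∘ ofNat α) :=
  ofSucc_forall_E fun a ha b hab hb => by simpa [ofSucc_w] using hpot a ha b hab hb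

theorem ofSucc_hasDistW {rank : α → ℕ} (hrank : ∀ a, ∀ b ∈ succ a, rank b < rank a)
    (hpot : ∀ a ∈ V, ∀ b ∈ succ a, b ∈ V → R b → R a ∧ w a b = Φ a - Φ b) {u t : α}
    (hu : u ∈ V) (hreach : Relation.ReflTransGen (SuccAdj V succ) u t) (ht : R t) :
    HasDistW (ofSucc V succ w) (ofSucc V succ w).w (encode u) (encode t) (Φ u - Φ t) := by
  simpa using hasDistW_of_potential (ofSucc_isRanking hrank) (ofSucc_isPotential hpot)
    (encode_mem_ofSucc_V.2 hu) (ofSucc_reflTransGen hreach) (by simpa using ht)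

theorem ofSucc_not_exists_path
    (hpot : ∀ a ∈ V, ∀ b ∈ succ a, b ∈ V → R b → R a ∧ w a b = Φ a - Φ b) {u t : α}
    (ht : R t) (hu : ¬ R u) : ¬ ∃ l, IsPathFromTo (ofSucc V succ w) l (encode u) (encode t) :=
  not_exists_path_of_potential (ofSucc_isPotential hpot) (by simpa using ht) (by simpa using hu)

end WDigraph

end OfSucc

/-- The index `q` of the dyadic block `[q * 2 ^ ℓ + 1, (q + 1) * 2 ^ ℓ]` containing `x ≥ 1`. -/
def blockIdx (x ℓ : ℕ) : ℕ := (x - 1) / 2 ^ ℓ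

theorem blockIdx_zero_right (x : ℕ) : blockIdx x 0 = x - 1 := by simp [blockIdx]

theorem blockIdx_succ_right (x ℓ : ℕ) : blockIdx x (ℓ + 1) = blockIdx x ℓ / 2 := by
  simp [blockIdx, pow_succ, Nat.div_div_eq_div_mul]

theorem blockIdx_eq_zero {x ℓ : ℕ} (h : x ≤ 2 ^ ℓ) : blockIdx x ℓ = 0 :=
  Nat.div_eq_of_lt (by have := Nat.two_pow_pos ℓ; omega)

theorem blockIdx_mono {x y : ℕ} (ℓ : ℕ) (h : x ≤ y) : blockIdx x ℓ ≤ blockIdx y ℓ :=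
  Nat.div_le_div_right (by omega)

theorem blockIdx_blockStart (c ℓ : ℕ) : blockIdx (c * 2 ^ ℓ + 1) ℓ = c := by
  simp [blockIdx, Nat.mul_div_cancel _ (Nat.two_pow_pos ℓ)]

theorem blockStart_le {x : ℕ} (ℓ : ℕ) (hx : 1 ≤ x) : blockIdx x ℓ * 2 ^ ℓ + 1 ≤ x := by
  have := Nat.div_mul_le_self (x - 1) (2 ^ ℓ)
  rw [blockIdx]
  omega

def accumulate (base : ℕ → ℤ) (f : ℕ → ℕ → ℤ) (i j : ℕ) : ℤ := base j + ∑ k ∈ Ico j i, f k j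

namespace PersistentTree

section Defs

variable (n : ℕ) (f : ℕ → ℕ → ℤ) (base : ℕ → ℤ)

def depth : ℕ := Nat.log 2 n + 1

/-- The points `x < k` where `f k` jumps; `accumulate` reads `f k x` only for `x ≤ k`. -/
def jumps (k : ℕ) : Finset ℕ := (Ico 1 k).filter fun x => f k x ≠ f k (x + 1)

/-- Version `v`, which adds column `v` and the update `f (v - 1)`, copies the level-`ℓ` node of
block `q`. -/
def Touches (v ℓ q : ℕ) : Prop := ∃ x ∈ insert v (jumps f (v - 1)), blockIdx x ℓ = q

open Classical in
noncomputable def latest (v ℓ q : ℕ) : ℕ := Nat.findGreatest (fun u => Touches f u ℓ q) v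

/-- `tree v ℓ q` is version `v` of the segment-tree node over the level-`ℓ` dyadic block `q`. -/
inductive Node
  | row (i : ℕ)
  | col (j : ℕ)
  | tree (v ℓ q : ℕ)

def Node.equiv : Node ≃ ℕ ⊕ ℕ ⊕ ℕ × ℕ × ℕ where
  toFun
    | .row i => .inl i
    | .col j => .inr (.inl j)
    | .tree v ℓ q => .inr (.inr (v, ℓ, q))
  invFun
    | .inl i => .row i
    | .inr (.inl j) => .col j
    | .inr (.inr (v, ℓ, q)) => .tree v ℓ q
  left_inv x := by cases x <;> rfl
  right_inv x := by rcases x with i | j | ⟨v, ℓ, q⟩ <;> rfl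

instance : Denumerable Node := Denumerable.ofEquiv _ Node.equiv

instance : DecidableEq Node := Encodable.decidableEqOfEncodable Node

def treeNodes : Finset Node :=
  (Icc 1 n ×ˢ range (depth n + 1)).biUnion fun p =>
    (insert p.1 (jumps f (p.1 - 1))).image fun x => .tree p.1 p.2 (blockIdx x p.2)

def vertices : Finset Node := (Icc 1 n).image .row ∪ (Icc 1 n).image .col ∪ treeNodes n f

noncomputable def succ : Node → Finset Node
  | .row i => {.tree i (depth n) 0}
  | .col _ => ∅
  | .tree _ 0 q => {.col (q + 1)}
  | .tree v (ℓ + 1) q => (Icc (2 * q) (2 * q + 1)).image fun c => .tree (latest f v ℓ c) ℓ c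

def weight : Node → Node → ℤ
  | .tree v 0 q, .col _ => accumulate base f v (q + 1)
  | .tree v (_ + 1) _, .tree u ℓ c => ∑ k ∈ Ico u v, f k (c * 2 ^ ℓ + 1)
  | _, _ => 0

noncomputable def graph : WDigraph := .ofSucc (vertices n f) (succ n f) (weight f base)

def rank : Node → ℕ
  | .row _ => depth n + 2
  | .col _ => 0
  | .tree _ ℓ _ => ℓ + 1

def Reaches (j : ℕ) : Node → Prop
  | .row i => j ≤ i
  | .col j' => j' = j
  | .tree v ℓ q => blockIdx j ℓ = q ∧ j ≤ v

def potential (j : ℕ) : Node → ℤ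
  | .col _ => 0
  | .row v | .tree v _ _ => accumulate base f v j

end Defs

variable {n : ℕ} {f : ℕ → ℕ → ℤ} {base : ℕ → ℤ}

theorem touches_self (v ℓ : ℕ) : Touches f v ℓ (blockIdx v ℓ) := ⟨v, mem_insert_self _ _, rfl⟩

theorem lt_of_touches_zero {v q : ℕ} (hv : 1 ≤ v) (h : Touches f v 0 q) : q < v := by
  obtain ⟨x, hx, rfl⟩ := h
  rw [blockIdx_zero_right]
  rcases mem_insert.1 hx with rfl | hx
  · omega
  · have := mem_Ico.1 (mem_filter.1 hx).1
    omega

theorem apply_eq_of_not_touches {k ℓ c a y : ℕ} (h : ¬ Touches f (k + 1) ℓ c) (ha : 1 ≤ a)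
    (hay : a ≤ y) (hyk : y ≤ k) (hac : blockIdx a ℓ = c) (hyc : blockIdx y ℓ = c) :
    f k a = f k y := by
  induction y, hay using Nat.le_induction with
  | base => rfl
  | succ y hay ih =>
    have hy : blockIdx y ℓ = c :=
      le_antisymm (hyc ▸ blockIdx_mono ℓ y.le_succ) (hac ▸ blockIdx_mono ℓ hay)
    refine (ih (by omega) hy).trans (not_not.1 fun hne => h ⟨y, mem_insert_of_mem ?_, hy⟩)
    exact mem_filter.2 ⟨mem_Ico.2 ⟨by omega, by omega⟩, hne⟩

section Latest

open Classical

theorem latest_le (v ℓ q : ℕ) : latest f v ℓ q ≤ v := Nat.findGreatest_le v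

theorem le_latest {u v ℓ q : ℕ} (huv : u ≤ v) (h : Touches f u ℓ q) : u ≤ latest f v ℓ q :=
  Nat.le_findGreatest huv h

theorem touches_latest {v ℓ q : ℕ} (h : 0 < latest f v ℓ q) : Touches f (latest f v ℓ q) ℓ q :=
  Nat.findGreatest_of_ne_zero (P := fun u => Touches f u ℓ q) rfl h.ne'

theorem not_touches_of_latest_lt {v ℓ q w : ℕ} (h : latest f v ℓ q < w) (hwv : w ≤ v) :
    ¬ Touches f w ℓ q :=
  Nat.findGreatest_is_greatest (P := fun u => Touches f u ℓ q) h hwv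

end Latest

theorem tree_mem_vertices {v ℓ q : ℕ} :
    Node.tree v ℓ q ∈ vertices n f ↔ (1 ≤ v ∧ v ≤ n) ∧ ℓ ≤ depth n ∧ Touches f v ℓ q := by
  simp only [vertices, treeNodes, Touches, mem_union, mem_image, mem_biUnion, mem_product,
    mem_Icc, mem_range, Nat.lt_succ_iff, Prod.exists, reduceCtorEq, and_false, exists_false,
    or_false, Node.tree.injEq]
  aesop

theorem row_mem_vertices {i : ℕ} (h1 : 1 ≤ i) (hn : i ≤ n) : Node.row i ∈ vertices n f := by
  simp [vertices, h1, hn]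

theorem col_mem_vertices {j : ℕ} (h1 : 1 ≤ j) (hn : j ≤ n) : Node.col j ∈ vertices n f := by
  simp [vertices, h1, hn]

theorem rank_lt_of_mem_succ {a b : Node} (h : b ∈ succ n f a) : rank n b < rank n a := by
  match a, h with
  | .row _, h => simp_all [succ, rank]
  | .tree _ 0 _, h => simp_all [succ, rank]
  | .tree _ (_ + 1) _, h =>
    obtain ⟨c, -, rfl⟩ := mem_image.1 h
    simp [rank]

theorem card_succ_le (a : Node) : #(succ n f a) ≤ 2 := by
  match a with
  | .row _ | .col _ | .tree _ 0 _ => simp [succ]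
  | .tree _ (_ + 1) q => exact card_image_le.trans (by simp; omega)

/-- A child's latest version misses exactly the updates made since, and none of them jumps
inside the child's block. -/
theorem sum_Ico_latest {v ℓ c j : ℕ} (hj : 1 ≤ j) (hjc : blockIdx j ℓ = c)
    (hju : j ≤ latest f v ℓ c) :
    ∑ k ∈ Ico (latest f v ℓ c) v, f k (c * 2 ^ ℓ + 1) =
      accumulate base f v j - accumulate base f (latest f v ℓ c) j := by
  have huv := latest_le (f := f) v ℓ c
  rw [accumulate, accumulate, ← sum_Ico_consecutive _ hju huv]
  simp only [add_sub_add_left_eq_sub, add_sub_cancel_left]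
  refine sum_congr rfl fun k hk => ?_
  have hk := mem_Ico.1 hk
  exact apply_eq_of_not_touches (not_touches_of_latest_lt (by omega) hk.2) (by omega)
    (hjc ▸ blockStart_le ℓ hj) (by omega) (blockIdx_blockStart c ℓ) hjc

theorem reaches_and_weight_eq {j : ℕ} (hj : 1 ≤ j) {a b : Node} (ha : a ∈ vertices n f)
    (hab : b ∈ succ n f a) (hb : Reaches j b) :
    Reaches j a ∧ weight f base a b = potential f base j a - potential f base j b := by
  match a, hab with
  | .row i, hab =>
    obtain rfl := mem_singleton.1 hab
    exact ⟨hb.2, by simp [weight, potential]⟩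
  | .tree v 0 q, hab =>
    obtain rfl := mem_singleton.1 hab
    obtain ⟨⟨hv, -⟩, -, htouch⟩ := tree_mem_vertices.1 ha
    have := lt_of_touches_zero hv htouch
    simp only [Reaches] at hb
    subst hb
    exact ⟨⟨by simp [blockIdx_zero_right], by omega⟩, by simp [weight, potential]⟩
  | .tree v (ℓ + 1) q, hab =>
    obtain ⟨c, hc, rfl⟩ := mem_image.1 hab
    obtain ⟨hjc, hju⟩ := hb
    have hc := mem_Icc.1 hc
    refine ⟨⟨by rw [blockIdx_succ_right, hjc]; omega, hju.trans (latest_le v ℓ c)⟩, ?_⟩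
    exact sum_Ico_latest hj hjc hju

theorem reflTransGen_tree_col {j : ℕ} (hj : 1 ≤ j) :
    ∀ {ℓ v : ℕ}, Node.tree v ℓ (blockIdx j ℓ) ∈ vertices n f → j ≤ v →
      Relation.ReflTransGen (WDigraph.SuccAdj (vertices n f) (succ n f))
        (.tree v ℓ (blockIdx j ℓ)) (.col j)
  | 0, v, hv, hjv => by
    obtain ⟨⟨-, hvn⟩, -⟩ := tree_mem_vertices.1 hv
    refine .single ⟨hv, col_mem_vertices hj (by omega), ?_⟩
    simp [succ, blockIdx_zero_right]
    omega
  | ℓ + 1, v, hv, hjv => by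
    obtain ⟨⟨-, hvn⟩, hℓ, -⟩ := tree_mem_vertices.1 hv
    have hju : j ≤ latest f v ℓ (blockIdx j ℓ) := le_latest hjv (touches_self j ℓ)
    have hu : Node.tree (latest f v ℓ (blockIdx j ℓ)) ℓ (blockIdx j ℓ) ∈ vertices n f :=
      tree_mem_vertices.2 ⟨⟨by omega, (latest_le _ _ _).trans hvn⟩, by omega,
        touches_latest (by omega)⟩
    refine .head ⟨hv, hu, mem_image.2 ⟨blockIdx j ℓ, ?_, rfl⟩⟩ (reflTransGen_tree_col hj hu hju)
    rw [mem_Icc, blockIdx_succ_right]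
    omega

theorem reflTransGen_row_col {i j : ℕ} (hj : 1 ≤ j) (hji : j ≤ i) (hin : i ≤ n) :
    Relation.ReflTransGen (WDigraph.SuccAdj (vertices n f) (succ n f))
      (.row i) (.col j) := by
  have hroot : blockIdx j (depth n) = 0 :=
    blockIdx_eq_zero ((hji.trans hin).trans (Nat.lt_pow_succ_log_self one_lt_two n).le)
  have hv : Node.tree i (depth n) (blockIdx j (depth n)) ∈ vertices n f := by
    rw [hroot, ← blockIdx_eq_zero (hin.trans (Nat.lt_pow_succ_log_self one_lt_two n).le)]
    exact tree_mem_vertices.2 ⟨⟨by omega, hin⟩, le_rfl, touches_self i _⟩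
  refine .head ⟨row_mem_vertices (by omega) hin, hv, ?_⟩ (reflTransGen_tree_col hj hv hji)
  simp [succ, hroot]

theorem isDAG_graph : IsDAG (graph n f base) :=
  (WDigraph.ofSucc_isRanking fun _ _ => rank_lt_of_mem_succ).isDAG

theorem hasDistW_graph {i j : ℕ} (hj : 1 ≤ j) (hji : j ≤ i) (hin : i ≤ n) :
    HasDistW (graph n f base) (graph n f base).w (Encodable.encode (Node.row i))
      (Encodable.encode (Node.col j)) (accumulate base f i j) := by
  have := WDigraph.ofSucc_hasDistW (R := Reaches j) (Φ := potential f base j)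
    (fun _ _ => rank_lt_of_mem_succ) (fun _ ha _ hab _ hb => reaches_and_weight_eq hj ha hab hb)
    (row_mem_vertices (by omega) hin) (reflTransGen_row_col hj hji hin) rfl
  rwa [potential, potential, sub_zero] at this

theorem not_exists_path_graph {i j : ℕ} (hi : 1 ≤ i) (hij : i < j) :
    ¬ ∃ l, IsPathFromTo (graph n f base) l (Encodable.encode (Node.row i))
      (Encodable.encode (Node.col j)) :=
  WDigraph.ofSucc_not_exists_path (R := Reaches j)
    (fun _ ha _ hab _ hb => reaches_and_weight_eq (base := base) (by omega) ha hab hb)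
    rfl (show ¬ j ≤ i by omega)

theorem card_treeNodes_le {b : ℕ} (hb : ∀ k < n, #(jumps f k) ≤ b) :
    #(treeNodes n f) ≤ n * (depth n + 1) * (b + 1) := by
  calc #(treeNodes n f)
      ≤ ∑ p ∈ Icc 1 n ×ˢ range (depth n + 1), (b + 1) := by
        refine card_biUnion_le.trans (sum_le_sum fun p hp => ?_)
        have hp := mem_Icc.1 (mem_product.1 hp).1
        exact card_image_le.trans ((card_insert_le _ _).trans (by grind))
    _ = n * (depth n + 1) * (b + 1) := by simp

theorem size_graph_le {b : ℕ} (hb : ∀ k < n, #(jumps f k) ≤ b) :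
    (graph n f base).size ≤ 3 * (2 * n + n * (depth n + 1) * (b + 1)) := by
  have hV : #(vertices n f) ≤ 2 * n + #(treeNodes n f) := by
    refine (card_union_le _ _).trans (Nat.add_le_add_right ((card_union_le _ _).trans ?_) _)
    have := card_image_le (s := Icc 1 n) (f := Node.row)
    have := card_image_le (s := Icc 1 n) (f := Node.col)
    simp only [Nat.card_Icc, add_tsub_cancel_right] at *
    omega
  have := card_treeNodes_le hb
  exact (WDigraph.size_ofSucc_le card_succ_le).trans (by omega)

theorem size_graph_le_logb {b : ℕ} (hb : ∀ k < n, #(jumps f k) ≤ b) :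
    ((graph n f base).size : ℝ) ≤ 6 * (b + 2) * n * (Real.logb 2 n + 1) := by
  have hsize : ((graph n f base).size : ℝ) ≤ 3 * (2 * n + n * (Nat.log 2 n + 2) * (b + 1)) := by
    exact_mod_cast size_graph_le hb
  have hlog : (Nat.log 2 n : ℝ) ≤ Real.logb 2 n := Real.natLog_le_logb n 2
  have hlog0 : (0 : ℝ) ≤ Nat.log 2 n := Nat.cast_nonneg _
  nlinarith [mul_le_mul_of_nonneg_left hlog (by positivity : (0 : ℝ) ≤ n * (b + 1)),
    mul_nonneg (by positivity : (0 : ℝ) ≤ n * (b + 1)) hlog0]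

end PersistentTree

open PersistentTree

theorem card_filter_ne_succ_le {g : ℕ → ℤ} {a b : ℕ} (hab : a ≤ b)
    (hg : ∀ x ∈ Ico a b, g x ≤ g (x + 1)) :
    (#((Ico a b).filter fun x => g x ≠ g (x + 1)) : ℤ) ≤ g b - g a := by
  induction b, hab using Nat.le_induction with
  | base => simp
  | succ b hab ih =>
    have ih := ih fun x hx => hg x (mem_Ico.2 ⟨(mem_Ico.1 hx).1, by grind⟩)
    have hb := hg b (mem_Ico.2 ⟨hab, b.lt_succ_self⟩)
    rw [Nat.Ico_succ_right_eq_insert_Ico hab, filter_insert]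
    split_ifs with hne
    · rw [card_insert_of_notMem (by simp)]
      push_cast
      omega
    · omega

def rowDiff (M : ℕ → ℕ → ℤ) (k x : ℕ) : ℤ := M (k + 1) x - M k x

theorem accumulate_rowDiff (M : ℕ → ℕ → ℤ) {i j : ℕ} (h : j ≤ i) :
    accumulate (fun j => M j j) (rowDiff M) i j = M i j := by
  simp only [accumulate, rowDiff]
  rw [sum_Ico_sub (fun k => M k j) h]
  ring

theorem card_jumps_rowDiff_le {n : ℕ} {M : ℕ → ℕ → ℤ} (hM : IsLowerTriUnitMonge n M) {k : ℕ}
    (hk : k < n) : #(jumps (rowDiff M) k) ≤ 2 := by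
  rcases Nat.eq_zero_or_pos k with rfl | hk0
  · simp [jumps]
  replace hk0 : 1 ≤ k := hk0
  have := card_filter_ne_succ_le (g := rowDiff M k) hk0 fun x hx =>
    hM.2 k x (mem_Ico.1 hx).1 (mem_Ico.1 hx).2 hk
  have := hM.1 k k hk0 le_rfl hk
  have := hM.1 k 1 le_rfl hk0 hk
  rw [jumps]
  simp only [rowDiff] at *
  omega

theorem lowerTri_unitMonge_emulator :
    ∃ C : ℝ, 0 < C ∧
      ∀ (n : ℕ) (M : ℕ → ℕ → ℤ), 2 ≤ n → IsLowerTriUnitMonge n M →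
        ∃ (H : WDigraph) (r c : ℕ → ℕ),
          IsDAG H ∧
          ((H.size : ℝ) ≤ C * (n : ℝ) * (Real.logb 2 (n : ℝ) + 1)) ∧
          (∀ x, 1 ≤ x → x ≤ n → r x ∈ H.V) ∧
          (∀ y, 1 ≤ y → y ≤ n → c y ∈ H.V) ∧
          (∀ x x', 1 ≤ x → x ≤ n → 1 ≤ x' → x' ≤ n → r x = r x' → x = x') ∧
          (∀ y y', 1 ≤ y → y ≤ n → 1 ≤ y' → y' ≤ n → c y = c y' → y = y') ∧
          (∀ x y, 1 ≤ x → x ≤ n → 1 ≤ y → y ≤ n → r x ≠ c y) ∧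
          (∀ i j, 1 ≤ j → j ≤ i → i ≤ n →
            HasDistW H H.w (r i) (c j) (M i j)) ∧
          (∀ i j, 1 ≤ i → i < j → j ≤ n →
            ¬ ∃ l, IsPathFromTo H l (r i) (c j)) := by
  refine ⟨24, by norm_num, fun n M _ hM => ?_⟩
  have hjumps : ∀ k < n, #(jumps (rowDiff M) k) ≤ 2 := fun k hk => card_jumps_rowDiff_le hM hk
  refine ⟨graph n (rowDiff M) (fun j => M j j), fun i => Encodable.encode (Node.row i),
    fun j => Encodable.encode (Node.col j), isDAG_graph, ?_, fun i h1 hn => ?_, fun j h1 hn => ?_,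
    fun _ _ _ _ _ _ h => ?_, fun _ _ _ _ _ _ h => ?_, fun _ _ _ _ _ _ h => ?_,
    fun i j hj hji hin => ?_, fun i j hi hij _ => not_exists_path_graph hi hij⟩
  · convert size_graph_le_logb (base := fun j => M j j) hjumps using 3
    norm_num
  · exact WDigraph.encode_mem_ofSucc_V.2 (row_mem_vertices h1 hn)
  · exact WDigraph.encode_mem_ofSucc_V.2 (col_mem_vertices h1 hn)
  · simpa using Encodable.encode_injective h
  · simpa using Encodable.encode_injective h
  · simpa using Encodable.encode_injective h
  · simpa only [accumulate_rowDiff M hji] using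
      hasDistW_graph (f := rowDiff M) (base := fun j => M j j) hj hji hin
end
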